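/- Let (S,≤) be a partially ordered set and let S' be a summit isolated suborder of (S,≤). Let C_{S'} be a closure system of S' with the induced order, and let C' be a closure system of the quotient (Q, ≤_{S'}), where Q is the set of equivalence classes of ≡_{S'}. Then C := ⋃(C' \ {S'}) ∪ C_{S'} is a closure system of (S,≤). -/

import Mathlib

/-- `S'` is an *isolated suborder* of the partially ordered set. -/
def IsIsolatedSuborder {α : Type*} [PartialOrder α] (S' : Set α) : Prop :=
  ∃ b t, IsLeast S' b ∧ IsGreatest S' t ∧
    ∀ x ∉ S', ∀ y ∈ S', (y ≤ x → t ≤ x) ∧ (x ≤ y → x ≤ b)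

/-- The equivalence class of `x` under `≡_{S'}`. -/
def eqClass {α : Type*} (S' : Set α) (x : α) : Set α :=
  {y | (x ∈ S' ∧ y ∈ S') ∨ (x ∉ S' ∧ y = x)}

/-- The set of equivalence classes of `≡_{S'}`. -/
def quotClasses {α : Type*} (S' : Set α) : Set (Set α) :=
  Set.range (eqClass S')

/-- The quotient relation on equivalence classes. -/
def qle {α : Type*} [PartialOrder α] (A B : Set α) : Prop :=
  ∃ a ∈ A, ∃ b ∈ B, a ≤ b

/-- `b` is the least element of `A` with respect to the relation `r`. -/
def IsLeastRel {β : Type*} (r : β → β → Prop) (A : Set β) (b : β) : Prop :=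
  b ∈ A ∧ ∀ y ∈ A, r b y

/-- `t` is the greatest element of `A` with respect to the relation `r`. -/
def IsGreatestRel {β : Type*} (r : β → β → Prop) (A : Set β) (t : β) : Prop :=
  t ∈ A ∧ ∀ y ∈ A, r y t

/-- `S'` is an isolated suborder of the ordered set with carrier `carrier` and
order relation `r`. -/
def IsIsolatedSuborderRel {β : Type*} (r : β → β → Prop) (carrier S' : Set β) : Prop :=
  S' ⊆ carrier ∧ ∃ b t, IsLeastRel r S' b ∧ IsGreatestRel r S' t ∧
    ∀ x ∈ carrier, x ∉ S' → ∀ y ∈ S', (r y x → r t x) ∧ (r x y → r x b)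

/-- `b` is a *bottleneck* of `x`: `b > x`, the interval `[x,b]` is a chain, and every
`y > x` lies in `[x,b]` or satisfies `y > b`. -/
def IsBottleneck {α : Type*} [PartialOrder α] (x b : α) : Prop :=
  x < b ∧ IsChain (· ≤ ·) (Set.Icc x b) ∧ ∀ y, x < y → y ∈ Set.Icc x b ∨ b < y

/-- A subset `C` of a partially ordered set is a *closure system* if for every `s`
the set of elements of `C` majorizing `s` has a least element. -/
def IsClosureSystem {α : Type*} [PartialOrder α] (C : Set α) : Prop :=
  ∀ s : α, ∃ m, IsLeast {c ∈ C | s ≤ c} m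

/-- `C` is a closure system of the ordered set with carrier `carrier` and order
relation `r`. -/
def IsClosureSystemRel {β : Type*} (r : β → β → Prop) (carrier C : Set β) : Prop :=
  C ⊆ carrier ∧ ∀ s ∈ carrier, ∃ m, (m ∈ C ∧ r s m) ∧ ∀ c ∈ C, r s c → r m c

/-!
A summit isolated suborder `S'` is an upper set: anything above one of its elements lies above
its top, which is maximal. Hence the only class majorizing `S'` in the quotient is `S'` itself,
so `S' ∈ C'`, and no singleton `{c} ∈ C'` lies above an element of `S'`. The closure of `s ∈ S'`
is therefore its closure in `C_{S'}`. For `s ∉ S'`, the closure of `{s}` in `C'` is either `S'`,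
and then `s` lies below the bottom `b` of `S'` and its closure is that of `b` in `C_{S'}`, or a
singleton `{z}`, and then `z` is the closure of `s`.
-/

section

variable {α : Type*} {S' : Set α}

theorem eqClass_of_mem {x : α} (hx : x ∈ S') : eqClass S' x = S' := by
  ext y; simp [eqClass, hx]

theorem eqClass_of_notMem {x : α} (hx : x ∉ S') : eqClass S' x = {x} := by
  ext y; simp [eqClass, hx]

theorem eq_or_eq_singleton_of_mem_quotClasses {B : Set α} (hB : B ∈ quotClasses S') :
    B = S' ∨ ∃ w ∉ S', B = {w} := by
  obtain ⟨w, rfl⟩ := hB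
  by_cases hw : w ∈ S'
  · exact .inl (eqClass_of_mem hw)
  · exact .inr ⟨w, hw, eqClass_of_notMem hw⟩

theorem mem_sUnion_diff_singleton_iff {C' : Set (Set α)} (hC' : C' ⊆ quotClasses S') {x : α} :
    x ∈ ⋃₀ (C' \ {S'}) ↔ x ∉ S' ∧ {x} ∈ C' := by
  constructor
  · rintro ⟨B, ⟨hBC, hBS⟩, hxB⟩
    rcases eq_or_eq_singleton_of_mem_quotClasses (hC' hBC) with rfl | ⟨w, hw, rfl⟩
    · exact absurd rfl hBS
    · obtain rfl : x = w := hxB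
      exact ⟨hw, hBC⟩
  · rintro ⟨hx, hxC⟩
    exact ⟨{x}, ⟨hxC, fun h => hx (h ▸ rfl)⟩, rfl⟩

end

section

variable {α : Type*} [PartialOrder α] {S' : Set α}

theorem qle_singleton_left_iff {x : α} {B : Set α} : qle {x} B ↔ ∃ y ∈ B, x ≤ y := by
  simp [qle]

theorem qle_singleton_right_iff {A : Set α} {y : α} : qle A {y} ↔ ∃ x ∈ A, x ≤ y := by
  simp [qle]

theorem qle_singleton_iff {x y : α} : qle {x} {y} ↔ x ≤ y := by
  simp [qle]

theorem IsIsolatedSuborder.isUpperSet (hS' : IsIsolatedSuborder S')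
    (hsummit : ∃ t, IsGreatest S' t ∧ ∀ y : α, t ≤ y → y = t) : IsUpperSet S' := by
  obtain ⟨_, t, -, ht, hiso⟩ := hS'
  obtain ⟨t', ht', hmax⟩ := hsummit
  intro y x hyx hy
  by_contra hx
  have htx : t' ≤ x := ht.unique ht' ▸ (hiso x hx y hy).1 hyx
  exact hx (hmax x htx ▸ ht'.1)

theorem IsUpperSet.mem_of_qle_singleton (hup : IsUpperSet S') {w : α} (h : qle S' {w}) :
    w ∈ S' := by
  obtain ⟨y, hy, hyw⟩ := qle_singleton_right_iff.1 h
  exact hup hyw hy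

theorem IsUpperSet.mem_of_isClosureSystemRel_qle (hup : IsUpperSet S') (hne : S'.Nonempty)
    {C' : Set (Set α)} (hC' : IsClosureSystemRel qle (quotClasses S') C') : S' ∈ C' := by
  obtain ⟨b, hb⟩ := hne
  obtain ⟨M, ⟨hMC, hS'M⟩, -⟩ := hC'.2 S' ⟨b, eqClass_of_mem hb⟩
  rcases eq_or_eq_singleton_of_mem_quotClasses (hC'.1 hMC) with rfl | ⟨w, hw, rfl⟩
  · exact hMC
  · exact absurd (hup.mem_of_qle_singleton hS'M) hw

variable {b : α} {CS' : Set α} {C' : Set (Set α)}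

theorem exists_isLeast_sUnion_diff_union_of_mem (hup : IsUpperSet S')
    (hCS' : IsClosureSystemRel (· ≤ ·) S' CS') (hC' : C' ⊆ quotClasses S') {s : α}
    (hs : s ∈ S') : ∃ m, IsLeast {c ∈ ⋃₀ (C' \ {S'}) ∪ CS' | s ≤ c} m := by
  obtain ⟨m, ⟨hmC, hsm⟩, hmin⟩ := hCS'.2 s hs
  refine ⟨m, ⟨.inr hmC, hsm⟩, ?_⟩
  rintro c ⟨hc | hc, hsc⟩
  · exact absurd (hup hsc hs) ((mem_sUnion_diff_singleton_iff hC').1 hc).1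
  · exact hmin c hc hsc

theorem exists_isLeast_sUnion_diff_union_of_qle_self (hup : IsUpperSet S') (hb : IsLeast S' b)
    (hlow : ∀ x ∉ S', ∀ y ∈ S', x ≤ y → x ≤ b) (hCS' : IsClosureSystemRel (· ≤ ·) S' CS')
    (hC' : C' ⊆ quotClasses S') {s : α} (hs : s ∉ S') (hsS' : qle {s} S')
    (hmin : ∀ B ∈ C', qle {s} B → qle S' B) :
    ∃ m, IsLeast {c ∈ ⋃₀ (C' \ {S'}) ∪ CS' | s ≤ c} m := by
  have hsb : s ≤ b := by
    obtain ⟨y, hy, hsy⟩ := qle_singleton_left_iff.1 hsS'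
    exact hlow s hs y hy hsy
  obtain ⟨m, ⟨hmC, hbm⟩, hmmin⟩ := hCS'.2 b hb.1
  refine ⟨m, ⟨.inr hmC, hsb.trans hbm⟩, ?_⟩
  rintro c ⟨hc | hc, hsc⟩
  · obtain ⟨hcS', hcC⟩ := (mem_sUnion_diff_singleton_iff hC').1 hc
    exact absurd (hup.mem_of_qle_singleton (hmin {c} hcC ⟨s, rfl, c, rfl, hsc⟩)) hcS'
  · exact hmmin c hc (hb.2 (hCS'.1 hc))

theorem exists_isLeast_sUnion_diff_union_of_qle_singleton (hb : IsLeast S' b)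
    (hlow : ∀ x ∉ S', ∀ y ∈ S', x ≤ y → x ≤ b) (hCS' : CS' ⊆ S') (hC' : C' ⊆ quotClasses S')
    (hS'C : S' ∈ C') {s z : α} (hz : z ∉ S') (hzC : {z} ∈ C') (hsz : s ≤ z)
    (hmin : ∀ B ∈ C', qle {s} B → qle {z} B) :
    ∃ m, IsLeast {c ∈ ⋃₀ (C' \ {S'}) ∪ CS' | s ≤ c} m := by
  refine ⟨z, ⟨.inl ((mem_sUnion_diff_singleton_iff hC').2 ⟨hz, hzC⟩), hsz⟩, ?_⟩
  rintro c ⟨hc | hc, hsc⟩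
  · obtain ⟨-, hcC⟩ := (mem_sUnion_diff_singleton_iff hC').1 hc
    exact qle_singleton_iff.1 (hmin {c} hcC ⟨s, rfl, c, rfl, hsc⟩)
  · obtain ⟨y, hy, hzy⟩ := qle_singleton_left_iff.1 (hmin S' hS'C ⟨s, rfl, c, hCS' hc, hsc⟩)
    exact (hlow z hz y hy hzy).trans (hb.2 (hCS' hc))

theorem isClosureSystem_sUnion_diff_union (hup : IsUpperSet S') (hb : IsLeast S' b)
    (hlow : ∀ x ∉ S', ∀ y ∈ S', x ≤ y → x ≤ b) (hCS' : IsClosureSystemRel (· ≤ ·) S' CS')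
    (hC' : IsClosureSystemRel qle (quotClasses S') C') :
    IsClosureSystem (⋃₀ (C' \ {S'}) ∪ CS') := by
  intro s
  by_cases hs : s ∈ S'
  · exact exists_isLeast_sUnion_diff_union_of_mem hup hCS' hC'.1 hs
  obtain ⟨M, ⟨hMC, hsM⟩, hmin⟩ := hC'.2 {s} ⟨s, eqClass_of_notMem hs⟩
  rcases eq_or_eq_singleton_of_mem_quotClasses (hC'.1 hMC) with rfl | ⟨z, hz, rfl⟩
  · exact exists_isLeast_sUnion_diff_union_of_qle_self hup hb hlow hCS' hC'.1 hs hsM hmin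
  · exact exists_isLeast_sUnion_diff_union_of_qle_singleton hb hlow hCS'.1 hC'.1
      (hup.mem_of_isClosureSystemRel_qle ⟨b, hb.1⟩ hC') hz hMC (qle_singleton_iff.1 hsM) hmin

end

theorem closureSystem_from_quotient_summit_general {α : Type*} [PartialOrder α]
    (S' : Set α) (hS' : IsIsolatedSuborder S')
    (hsummit : ∃ t, IsGreatest S' t ∧ ∀ y : α, t ≤ y → y = t)
    (CS' : Set α)
    (hCS' : IsClosureSystemRel (· ≤ ·) S' CS')
    (C' : Set (Set α)) (hC' : IsClosureSystemRel qle (quotClasses S') C') :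
    IsClosureSystem (⋃₀ (C' \ {S'}) ∪ CS') := by
  have hup := hS'.isUpperSet hsummit
  obtain ⟨b, _, hb, -, hiso⟩ := hS'
  exact isClosureSystem_sUnion_diff_union hup hb
    (fun x hx y hy => (hiso x hx y hy).2) hCS' hC'

/-- Let `S'` be a summit isolated suborder of `(S,≤)` (its greatest element is a
maximal element of `S`). If `C_{S'}` is a closure system of `S'` with the induced
order and `C'` is a closure system of the quotient, then `⋃(C' \ {S'}) ∪ C_{S'}`
is a closure system of `(S,≤)`. -/
theorem closureSystem_from_quotient_summit {α : Type*} [PartialOrder α]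
    (S' : Set α) (hS' : IsIsolatedSuborder S')
    (hsummit : ∃ t, IsGreatest S' t ∧ ∀ y : α, t ≤ y → y = t)
    (CS' : Set α) (hCS'sub : CS' ⊆ S')
    (hCS' : IsClosureSystemRel (· ≤ ·) S' CS')
    (C' : Set (Set α)) (hC' : IsClosureSystemRel qle (quotClasses S') C') :
    IsClosureSystem (⋃₀ (C' \ {S'}) ∪ CS') :=
  closureSystem_from_quotient_summit_general S' hS' hsummit CS' hCS' C' hC'
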